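/- Let n, k ∈ ℝ³ and Θ ∈ ℝ. If ⟨n,n⟩ = −1 and O = exp(Θ J(n)), then (O − O⁻¹)/2 = sin Θ · J(n); if ⟨n,n⟩ = +1 and O = exp(Θ J(n)), then (O − O⁻¹)/2 = sinh Θ · J(n); and if ⟨k,k⟩ = 0 and O = exp(J(k)), then (O − O⁻¹)/2 = J(k). -/

import Mathlib

/-!
`(O - O⁻¹)/2 = (exp A - exp (-A))/2` is the odd part `∑ A^(2m+1)/(2m+1)!` of the exponential
series. Since `J(u)³ = ⟨u,u⟩ J(u)`, the odd powers of `Θ J(u)` are `⟨u,u⟩^m Θ^(2m+1) J(u)`, so the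
series collapses to `(∑ ⟨u,u⟩^m Θ^(2m+1)/(2m+1)!) J(u)`, which is `sin Θ`, `sinh Θ` or `Θ` times
`J(u)` according as `⟨u,u⟩ = -1, 1, 0`.
-/

open Matrix

noncomputable section

/-- Tangent metric `η_T = diag(-1,1,1)` on `ℝ³`. -/
def etaT : Matrix (Fin 3) (Fin 3) ℝ := Matrix.diagonal ![-1, 1, 1]

/-- Tangent bilinear form `⟨u,w⟩ = uᵀ η_T w`. -/
def ipT (u w : Fin 3 → ℝ) : ℝ := u ⬝ᵥ (etaT *ᵥ w)

/-- The map `J : ℝ³ → M₃(ℝ)` implementing the Lorentzian cross product, `J(u)w = u × w`. -/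
def Jmat (u : Fin 3 → ℝ) : Matrix (Fin 3) (Fin 3) ℝ :=
  !![0, u 2, -u 1; u 2, 0, -u 0; -u 1, u 0, 0]

open NormedSpace Nat

theorem pow_two_mul_add_one_of_pow_three_eq_smul {R 𝔸 : Type*} [CommSemiring R] [Semiring 𝔸]
    [Algebra R 𝔸] {A : 𝔸} {c : R} (hA : A ^ 3 = c • A) (m : ℕ) :
    A ^ (2 * m + 1) = c ^ m • A := by
  induction m with
  | zero => simp
  | succ m ih =>
    rw [show 2 * (m + 1) + 1 = 2 * m + 1 + 2 by ring, pow_add, ih, smul_mul_assoc,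
      ← pow_succ' A 2, hA, smul_smul, pow_succ]

section OddPartOfExp

variable {𝕂 𝔸 : Type*} [RCLike 𝕂] [NormedRing 𝔸] [NormedAlgebra 𝕂 𝔸] [CompleteSpace 𝔸]

theorem hasSum_inv_two_smul_exp_sub_exp_neg (x : 𝔸) :
    HasSum (fun m : ℕ => ((2 * m + 1)! : 𝕂)⁻¹ • x ^ (2 * m + 1))
      ((2 : 𝕂)⁻¹ • (exp x - exp (-x))) := by
  have hsum := ((exp_series_hasSum_exp' (𝕂 := 𝕂) x).sub
    (exp_series_hasSum_exp' (𝕂 := 𝕂) (-x))).const_smul (2 : 𝕂)⁻¹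
  have hodd : Function.Injective fun m : ℕ => 2 * m + 1 := fun a b h => by simpa using h
  refine (hodd.hasSum_iff fun n hn => ?_).mpr hsum |>.congr_fun fun m => ?_
  · obtain ⟨k, rfl | rfl⟩ := Nat.even_or_odd' n
    · simp [(even_two_mul k).neg_pow]
    · exact absurd ⟨k, rfl⟩ hn
  · simp only [Function.comp_apply, (odd_two_mul_add_one m).neg_pow, smul_neg, sub_neg_eq_add,
      ← two_smul 𝕂, smul_smul, inv_mul_cancel_left₀ (two_ne_zero' 𝕂)]

theorem inv_two_smul_exp_smul_sub_exp_neg_smul_of_pow_three {A : 𝔸} {c t s : 𝕂}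
    (hA : A ^ 3 = c • A) (hs : HasSum (fun m : ℕ => c ^ m * t ^ (2 * m + 1) / (2 * m + 1)!) s) :
    (2 : 𝕂)⁻¹ • (exp (t • A) - exp (-(t • A))) = s • A := by
  refine (hasSum_inv_two_smul_exp_sub_exp_neg (t • A)).unique
    ((hs.smul_const A).congr_fun fun m => ?_)
  rw [smul_pow, pow_two_mul_add_one_of_pow_three_eq_smul hA, smul_smul, smul_smul]
  congr 1
  ring

end OddPartOfExp

-- `exp` depends only on the topology, so any submultiplicative norm lets us apply the lemmas above.
attribute [local instance] Matrix.linftyOpNormedAddCommGroup Matrix.linftyOpNormedRing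
  Matrix.linftyOpNormedAlgebra

theorem Jmat_pow_three (u : Fin 3 → ℝ) : Jmat u ^ 3 = ipT u u • Jmat u := by
  have hip : ipT u u = -(u 0 * u 0) + (u 1 * u 1 + u 2 * u 2) := by
    simp only [ipT, etaT, dotProduct, mulVec_diagonal, Fin.sum_univ_three, cons_val]
    ring
  rw [hip, pow_three]
  ext i j
  fin_cases i <;> fin_cases j <;> simp [Jmat, Matrix.mul_apply, Fin.sum_univ_three] <;> ring

/-- Antisymmetric parts: `(O - O⁻¹)/2 = sin Θ · J(n)` in the elliptic case,
`sinh Θ · J(n)` in the hyperbolic case, and `J(k)` in the parabolic case. -/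
theorem antisymmetric_part_exp_J (n k : Fin 3 → ℝ) (Θ : ℝ) :
    (ipT n n = -1 →
      (1/2 : ℝ) • (NormedSpace.exp (Θ • Jmat n) - (NormedSpace.exp (Θ • Jmat n))⁻¹) =
        Real.sin Θ • Jmat n) ∧
    (ipT n n = 1 →
      (1/2 : ℝ) • (NormedSpace.exp (Θ • Jmat n) - (NormedSpace.exp (Θ • Jmat n))⁻¹) =
        Real.sinh Θ • Jmat n) ∧
    (ipT k k = 0 →
      (1/2 : ℝ) • (NormedSpace.exp (Jmat k) - (NormedSpace.exp (Jmat k))⁻¹) = Jmat k) := by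
  simp only [← Matrix.exp_neg, one_div]
  refine ⟨fun hn => ?_, fun hn => ?_, fun hk => ?_⟩
  · refine inv_two_smul_exp_smul_sub_exp_neg_smul_of_pow_three (hn ▸ Jmat_pow_three n) ?_
    simpa using Real.hasSum_sin Θ
  · refine inv_two_smul_exp_smul_sub_exp_neg_smul_of_pow_three (hn ▸ Jmat_pow_three n) ?_
    simpa using Real.hasSum_sinh Θ
  · have hseries : HasSum (fun m : ℕ => (0 : ℝ) ^ m * 1 ^ (2 * m + 1) / (2 * m + 1)!) 1 := by
      convert hasSum_ite_eq 0 (1 : ℝ) using 2 with m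
      rcases m with _ | m <;> simp
    have h := inv_two_smul_exp_smul_sub_exp_neg_smul_of_pow_three (hk ▸ Jmat_pow_three k) hseries
    rwa [one_smul] at h
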